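/- Assume n > 0 or m > 2. The structure 𝔄 admits a near-unanimity polymorphism of arity m^{2^n}+1, but admits no near-unanimity polymorphism of arity k for any k with 3 ≤ k ≤ m^{2^n}. -/

import Mathlib

/- The universe `A = {a, 0, 1, ..., n}` of size `n+2` is encoded as `Fin (n+2)`,
where `a` is encoded as `0` and the element `i ∈ {0, ..., n}` is encoded as `i+1`;
this encoding is order-preserving for the order `a < 0 < 1 < ⋯ < n`. -/

/-- A `k`-ary operation `t` is compatible with (preserves) an `r`-ary relation `S`:
applying `t` coordinatewise to `k` tuples from `S` yields a tuple in `S`. -/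
def Compat {A : Type*} {k r : ℕ} (t : (Fin k → A) → A) (S : Set (Fin r → A)) : Prop :=
  ∀ u : Fin k → Fin r → A, (∀ j, u j ∈ S) → (fun i => t fun j => u j i) ∈ S

/-- Compatibility with a unary relation `X`: `t` maps `X^k` into `X`. -/
def CompatUnary {A : Type*} {k : ℕ} (t : (Fin k → A) → A) (X : Set A) : Prop :=
  ∀ u : Fin k → A, (∀ j, u j ∈ X) → t u ∈ X

/-- Compatibility with a binary relation, given as a set of pairs. -/
def Compat2 {A : Type*} {k : ℕ} (t : (Fin k → A) → A) (S : Set (A × A)) : Prop :=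
  ∀ u w : Fin k → A, (∀ j, (u j, w j) ∈ S) → (t u, t w) ∈ S

/-- An operation `t : A^k → A` is a near-unanimity (NU) operation if `k ≥ 3` and
any tuple whose coordinates all equal `x` except possibly one coordinate (with
value `y`) is mapped to the majority value `x`. -/
def IsNU {A : Type*} {k : ℕ} (t : (Fin k → A) → A) : Prop :=
  3 ≤ k ∧ ∀ (x y : A) (j : Fin k), t (Function.update (fun _ => x) j y) = x

/-- The `(m+1)`-ary relation `S_i`: all tuples `(x_0, …, x_m)` with
`x_0 ∈ {a,0,…,i-1}` (encoded value `≤ i`) and `x_1, …, x_m ∈ {a, i}` (encoded value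
`0` or `i+1`), except the tuple `(a, i, …, i)`, together with the constant tuples
`(j, …, j)` for `j ∈ {i+1, …, n}` (encoded value `≥ i+2`). -/
def Srel (n m i : ℕ) : Set (Fin (m + 1) → Fin (n + 2)) :=
  {x | ((x 0).val ≤ i ∧ (∀ j, j ≠ 0 → ((x j).val = 0 ∨ (x j).val = i + 1)) ∧
          ¬((x 0).val = 0 ∧ ∀ j, j ≠ 0 → (x j).val = i + 1)) ∨
        (∃ c : Fin (n + 2), i + 2 ≤ c.val ∧ ∀ j, x j = c)}

/-- A polymorphism of the structure `𝔄 = (A; S_0, …, S_n, (X)_{∅ ≠ X ⊆ A})`: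
an operation compatible with each `S_i` and with every nonempty unary relation. -/
def PolyA (n m : ℕ) {k : ℕ} (t : (Fin k → Fin (n + 2)) → Fin (n + 2)) : Prop :=
  (∀ i ≤ n, Compat t (Srel n m i)) ∧
  (∀ X : Set (Fin (n + 2)), X.Nonempty → CompatUnary t X)

/-!
In the encoding `a = 0`, `i ↦ i + 1`, the relation `S_i` consists of the tuples with first entry
`≤ i`, other entries in `{0, i + 1}`, not `(0, i + 1, …, i + 1)`, and of the constants `> i + 1`.

The NU operation of arity `K = m^(2^n) + 1` looks at the counts `c_l = #{j | u_j ≤ l}` and returns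
the largest *jump* `v ≥ 1`, i.e. `m^(2^(v-1)) c_(v-1) < c_v`, or `0` if there is none. On a
near-unanimous tuple with majority `x` the only jump is at `x`, since `m^(2^n) < K ≤ 2 (K - 1)`.
For `S_i`, jumps above `i + 1` are seen alike in all columns; otherwise the first entry of the
result is `≤ i` and the others lie in `{0, i + 1}`. If the result were `(0, i + 1, …, i + 1)`, the
absence of jumps in the first column would telescope to `m c_i ≤ m^(2^i) c_0`, while every other
column jumps at `i + 1` and each row starting with `0` has a `0` elsewhere, so
`m^(2^i) c_0 < m c_i`.

For the lower bound, a tuple `q` with entries `0` or `> i + 1` absorbs into `i + 1` with slack `s`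
if `t` returns `i + 1` whenever all but at most `s` zeros of `q` are replaced by `i + 1`. By
induction on `i` this forces more than `s m^(2^i)` zeros. Otherwise `S_i` forces `t q = 0`; the
failure of absorption at the lower levels (induction hypothesis, with `S_(i-1), …, S_0`) lets one
raise all but `s m` of the zeros to values `≤ i` keeping `t = 0`; spreading the remaining zeros over
the last `m` columns of `S_i`, `s` per column, yields the excluded tuple `(0, i + 1, …, i + 1)`.
The NU identities make the constant tuple `0…0` absorb into `n + 1` with slack `1`, so
`k > m^(2^n)`.
-/

open Finset

theorem Nat.pow_two_pow_succ_sub_one (m d : ℕ) :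
    m ^ (2 ^ (d + 1) - 1) = m ^ (2 ^ d - 1) * m ^ 2 ^ d := by
  rw [← pow_add, pow_succ]
  have := Nat.one_le_two_pow (n := d)
  congr 1
  omega

theorem Nat.mul_pow_two_pow_sub_one (m d : ℕ) : m * m ^ (2 ^ d - 1) = m ^ 2 ^ d := by
  rw [← pow_succ']
  have := Nat.one_le_two_pow (n := d)
  congr 1
  omega

theorem Nat.findGreatest_eq_of_iff_of_le {P Q : ℕ → Prop} [DecidablePred P] [DecidablePred Q]
    {a N : ℕ} (hPQ : ∀ v, a ≤ v → (P v ↔ Q v)) (h : ∃ v, a ≤ v ∧ v ≤ N ∧ P v) :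
    Nat.findGreatest P N = Nat.findGreatest Q N := by
  obtain ⟨v, hav, hvN, hv⟩ := h
  have hP := Nat.findGreatest_spec hvN hv
  have hPv := Nat.le_findGreatest hvN hv
  have hQ : Q (Nat.findGreatest P N) := (hPQ _ (hav.trans hPv)).1 hP
  have hQv := Nat.le_findGreatest (Nat.findGreatest_le N) hQ
  refine le_antisymm hQv (Nat.le_findGreatest (Nat.findGreatest_le N) ?_)
  exact (hPQ _ (hav.trans (hPv.trans hQv))).2 (Nat.findGreatest_spec (Nat.findGreatest_le N) hQ)

theorem Nat.findGreatest_le_of_forall_not {P : ℕ → Prop} [DecidablePred P] {a N : ℕ}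
    (h : ∀ v, a < v → v ≤ N → ¬ P v) : Nat.findGreatest P N ≤ a := by
  by_contra! hlt
  exact h _ hlt (Nat.findGreatest_le N) (Nat.findGreatest_of_ne_zero rfl (by omega))

theorem Finset.exists_cover_of_card_le_mul {α : Type*} [DecidableEq α] {s : ℕ} :
    ∀ {M : ℕ} {E : Finset α}, #E ≤ M * s →
      ∃ P : Fin M → Finset α, (∀ p, #(P p) ≤ s) ∧ ∀ x ∈ E, ∃ p, x ∈ P p
  | 0, E, h => ⟨Fin.elim0, fun p => p.elim0, by simp_all⟩
  | M + 1, E, h => by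
    obtain ⟨F, hFE, hF⟩ := E.exists_subset_card_eq (min_le_right s #E)
    obtain ⟨P, hP, hcover⟩ := exists_cover_of_card_le_mul (s := s) (M := M) (E := E \ F) (by
      rw [card_sdiff_of_subset hFE, hF]
      rw [Nat.succ_mul] at h
      omega)
    refine ⟨Fin.cons F P, Fin.cases (hF ▸ min_le_left _ _) hP, fun x hx => ?_⟩
    by_cases hxF : x ∈ F
    · exact ⟨0, hxF⟩
    · obtain ⟨p, hp⟩ := hcover x (mem_sdiff.2 ⟨hx, hxF⟩)
      exact ⟨p.succ, hp⟩

def RowsIn {A : Type*} {k m : ℕ} (S : Set (Fin (m + 1) → A)) (c₀ : Fin k → A)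
    (cs : Fin m → Fin k → A) : Prop :=
  ∀ j, (Fin.cons (c₀ j) (fun p => cs p j) : Fin (m + 1) → A) ∈ S

theorem compat_iff_cons {A : Type*} {k m : ℕ} (t : (Fin k → A) → A) (S : Set (Fin (m + 1) → A)) :
    Compat t S ↔ ∀ (c₀ : Fin k → A) (cs : Fin m → Fin k → A), RowsIn S c₀ cs →
      (Fin.cons (t c₀) (fun p => t (cs p)) : Fin (m + 1) → A) ∈ S := by
  constructor
  · intro h c₀ cs hrows
    convert h _ hrows using 1
    funext p
    cases p using Fin.cases <;> rfl
  · intro h u hu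
    convert h (fun j => u j 0) (fun p j => u j p.succ)
      (fun j => (Fin.cons_self_tail (u j)).symm ▸ hu j) using 1
    funext p
    cases p using Fin.cases <;> rfl

theorem cons_mem_Srel_iff {n m i : ℕ} {x₀ : Fin (n + 2)} {xs : Fin m → Fin (n + 2)} :
    (Fin.cons x₀ xs : Fin (m + 1) → Fin (n + 2)) ∈ Srel n m i ↔
      ((x₀ : ℕ) ≤ i ∧ (∀ p, xs p = 0 ∨ (xs p : ℕ) = i + 1) ∧ (x₀ ≠ 0 ∨ ∃ p, xs p = 0)) ∨
        (i + 1 < (x₀ : ℕ) ∧ ∀ p, xs p = x₀) := by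
  simp only [Srel, Set.mem_ofPred_eq, Fin.forall_fin_succ, Fin.cons_zero, Fin.cons_succ, ne_eq,
    not_true_eq_false, IsEmpty.forall_iff, Fin.succ_ne_zero, not_false_eq_true, forall_const,
    true_and, Fin.val_eq_zero_iff, not_and, not_forall]
  constructor
  · rintro (⟨h₀, hs, h⟩ | ⟨c, hc, rfl, h⟩)
    · refine .inl ⟨h₀, hs, ?_⟩
      by_cases hx : x₀ = 0
      · obtain ⟨p, hp⟩ := h hx
        exact .inr ⟨p, (hs p).resolve_right hp⟩
      · exact .inl hx
    · exact .inr ⟨by omega, h⟩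
  · rintro (⟨h₀, hs, h⟩ | ⟨hc, h⟩)
    · refine .inl ⟨h₀, hs, fun hx => ?_⟩
      obtain ⟨p, hp⟩ := h.resolve_left (not_not.2 hx)
      exact ⟨p, by simp [hp]⟩
    · exact .inr ⟨x₀, by omega, rfl, h⟩

theorem compatUnary_of_forall_apply_mem_range {A : Type*} {k : ℕ} {t : (Fin k → A) → A}
    (h : ∀ u, t u ∈ Set.range u) (X : Set A) : CompatUnary t X := fun u hu => by
  obtain ⟨j, hj⟩ := h u
  exact hj ▸ hu j

theorem apply_mem_range_of_forall_compatUnary {A : Type*} {k : ℕ} {t : (Fin k → A) → A}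
    (h : ∀ X : Set A, X.Nonempty → CompatUnary t X) (hk : 0 < k) (q : Fin k → A) :
    t q ∈ Set.range q :=
  h _ ⟨q ⟨0, hk⟩, Set.mem_range_self _⟩ q Set.mem_range_self

namespace NearUnanimity

section UpperBound

variable {n m K : ℕ}

def countLE (u : Fin K → Fin (n + 2)) (l : ℕ) : ℕ := #{j | (u j : ℕ) ≤ l}

def IsJump (m : ℕ) (u : Fin K → Fin (n + 2)) : ℕ → Prop
  | 0 => False
  | v + 1 => m ^ 2 ^ v * countLE u v < countLE u (v + 1)

instance (u : Fin K → Fin (n + 2)) : DecidablePred (IsJump m u)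
  | 0 => inferInstanceAs (Decidable False)
  | v + 1 => inferInstanceAs (Decidable (m ^ 2 ^ v * countLE u v < countLE u (v + 1)))

def nuOp (n m : ℕ) (u : Fin K → Fin (n + 2)) : Fin (n + 2) :=
  ⟨Nat.findGreatest (IsJump m u) (n + 1), Nat.lt_succ_of_le (Nat.findGreatest_le _)⟩

theorem countLE_le_card (u : Fin K → Fin (n + 2)) (l : ℕ) : countLE u l ≤ K :=
  (card_filter_le _ _).trans_eq (card_fin K)

theorem exists_val_eq_of_isJump (hm : 0 < m) {u : Fin K → Fin (n + 2)} {v : ℕ}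
    (h : IsJump m u (v + 1)) : ∃ j, (u j : ℕ) = v + 1 := by
  by_contra! hne
  have : countLE u (v + 1) ≤ countLE u v :=
    card_le_card (monotone_filter_right _ fun j hj => by have := hne j; omega)
  exact absurd h (not_lt.2 (this.trans (Nat.le_mul_of_pos_left _ (by positivity))))

theorem mul_countLE_le_of_not_isJump {u : Fin K → Fin (n + 2)} {v : ℕ}
    (h : ∀ w < v, ¬ IsJump m u (w + 1)) : m * countLE u v ≤ m ^ 2 ^ v * countLE u 0 := by
  induction v with
  | zero => simp
  | succ v ih =>
    calc m * countLE u (v + 1) ≤ m * (m ^ 2 ^ v * countLE u v) :=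
          Nat.mul_le_mul_left _ (not_lt.1 (h v v.lt_succ_self))
      _ = m ^ 2 ^ v * (m * countLE u v) := by ring
      _ ≤ m ^ 2 ^ v * (m ^ 2 ^ v * countLE u 0) :=
          Nat.mul_le_mul_left _ (ih fun w hw => h w (by omega))
      _ = m ^ 2 ^ (v + 1) * countLE u 0 := by ring

theorem nuOp_mem_range (hm : 0 < m) (hK : 0 < K) (u : Fin K → Fin (n + 2)) :
    nuOp n m u ∈ Set.range u := by
  by_cases h : Nat.findGreatest (IsJump m u) (n + 1) = 0
  · have hbound := mul_countLE_le_of_not_isJump (m := m) (u := u) (v := n + 1)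
      fun w hw => Nat.findGreatest_eq_zero_iff.1 h w.succ_pos hw
    have hall : countLE u (n + 1) = K := by
      rw [countLE, filter_true_of_mem fun j _ => Nat.le_of_lt_succ (u j).2, card_univ,
        Fintype.card_fin]
    obtain ⟨j, hj⟩ : (univ.filter fun j => (u j : ℕ) ≤ 0).Nonempty := by
      rw [← card_pos]
      by_contra! h0
      rw [hall, countLE, Nat.le_zero.1 h0, mul_zero] at hbound
      exact (Nat.mul_pos hm hK).not_ge hbound
    exact ⟨j, Fin.ext (h.trans (Nat.le_zero.1 (mem_filter.1 hj).2).symm).symm⟩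
  · obtain ⟨v, hv⟩ := Nat.exists_eq_succ_of_ne_zero h
    obtain ⟨j, hj⟩ := exists_val_eq_of_isJump hm (Nat.findGreatest_of_ne_zero hv v.succ_ne_zero)
    exact ⟨j, Fin.ext (hv.trans hj.symm).symm⟩

theorem countLE_update (x y : Fin (n + 2)) (j : Fin K) (l : ℕ) :
    countLE (Function.update (fun _ => x) j y) l =
      (if (y : ℕ) ≤ l then 1 else 0) + (if (x : ℕ) ≤ l then K - 1 else 0) := by
  rw [countLE, card_filter]
  simp only [Function.apply_update (fun _ (v : Fin (n + 2)) => if (v : ℕ) ≤ l then 1 else 0)]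
  rw [sum_update_of_mem (mem_univ j), sum_const, card_sdiff, card_univ, Fintype.card_fin,
    inter_univ, card_singleton, smul_eq_mul]
  split_ifs <;> simp

theorem not_isJump_of_card_sub_one_le (hm : 2 ≤ m) (hK : 2 ≤ K) {u : Fin K → Fin (n + 2)}
    {w : ℕ} (h : K - 1 ≤ countLE u w) : ¬ IsJump m u (w + 1) := by
  intro hjump
  have hpow : 2 ≤ m ^ 2 ^ w := hm.trans (Nat.le_self_pow (by positivity) m)
  have := Nat.mul_le_mul hpow h
  have := countLE_le_card u (w + 1)
  change m ^ 2 ^ w * countLE u w < countLE u (w + 1) at hjump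
  omega

theorem isNU_nuOp (hm : 2 ≤ m) : IsNU (nuOp n m (K := m ^ 2 ^ n + 1)) := by
  have hK : 2 ≤ m ^ 2 ^ n := hm.trans (Nat.le_self_pow (by positivity) m)
  refine ⟨by omega, fun x y j =>
    Fin.ext (Nat.findGreatest_eq_iff.2 ⟨Nat.le_of_lt_succ x.2, ?_, ?_⟩)⟩
  · intro hx
    obtain ⟨w, hw⟩ := Nat.exists_eq_succ_of_ne_zero hx
    have hwn : m ^ 2 ^ w ≤ m ^ 2 ^ n :=
      Nat.pow_le_pow_right (by omega) (Nat.pow_le_pow_right two_pos (by omega))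
    rw [hw]
    change m ^ 2 ^ w * countLE _ w < countLE _ (w + 1)
    rw [countLE_update, countLE_update]
    split_ifs <;> simp only [mul_one, mul_zero, add_zero, zero_add, Nat.add_sub_cancel] <;> omega
  · intro v hxv _ hjump
    obtain ⟨w, rfl⟩ := Nat.exists_eq_succ_of_ne_zero (by omega : v ≠ 0)
    refine not_isJump_of_card_sub_one_le hm (by omega) ?_ hjump
    rw [countLE_update, if_pos (by omega : (x : ℕ) ≤ w)]
    omega

section Rows

variable {i : ℕ} {c₀ : Fin K → Fin (n + 2)} {cs : Fin m → Fin K → Fin (n + 2)}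

theorem countLE_side_eq
    (hrows : RowsIn (Srel n m i) c₀ cs)
    (p : Fin m) {l : ℕ} (hl : i + 1 ≤ l) : countLE (cs p) l = countLE c₀ l := by
  unfold countLE
  congr 1
  refine filter_congr fun j _ => ?_
  rcases cons_mem_Srel_iff.1 (hrows j) with ⟨h₀, hs, -⟩ | ⟨-, hs⟩
  · rcases hs p with h | h
    · rw [h, Fin.val_zero]
      omega
    · omega
  · rw [hs p]

theorem countLE_head_succ
    (hrows : RowsIn (Srel n m i) c₀ cs) :
    countLE c₀ (i + 1) = countLE c₀ i := by
  unfold countLE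
  congr 1
  refine filter_congr fun j _ => ?_
  rcases cons_mem_Srel_iff.1 (hrows j) with ⟨h₀, -, -⟩ | ⟨h₀, -⟩ <;> omega

theorem countLE_side_of_le
    (hrows : RowsIn (Srel n m i) c₀ cs)
    (p : Fin m) {l : ℕ} (hl : l ≤ i) : countLE (cs p) l = countLE (cs p) 0 := by
  unfold countLE
  congr 1
  refine filter_congr fun j _ => ?_
  rcases cons_mem_Srel_iff.1 (hrows j) with ⟨-, hs, -⟩ | ⟨h₀, hs⟩
  · rcases hs p with h | h
    · simp [h]
    · omega
  · rw [hs p]; omega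

theorem countLE_head_zero_le_sum
    (hrows : RowsIn (Srel n m i) c₀ cs) :
    countLE c₀ 0 ≤ ∑ p, countLE (cs p) 0 := by
  refine (card_le_card fun j hj => ?_).trans card_biUnion_le
  have hj₀ : c₀ j = 0 := Fin.ext (Nat.le_zero.1 (mem_filter.1 hj).2)
  rcases cons_mem_Srel_iff.1 (hrows j) with ⟨-, -, h | ⟨p, hp⟩⟩ | ⟨h, -⟩
  · exact absurd hj₀ h
  · exact mem_biUnion.2 ⟨p, mem_univ p, mem_filter.2 ⟨mem_univ j, by simp [hp]⟩⟩
  · simp [hj₀] at h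

theorem isJump_side_iff
    (hrows : RowsIn (Srel n m i) c₀ cs)
    (p : Fin m) {v : ℕ} (hv : i + 2 ≤ v) : IsJump m (cs p) v ↔ IsJump m c₀ v := by
  obtain ⟨w, rfl⟩ := Nat.exists_eq_add_of_le' (by omega : 1 ≤ v)
  change _ < _ ↔ _ < _
  rw [countLE_side_eq hrows p (by omega), countLE_side_eq hrows p (by omega)]

theorem nuOp_side_eq_zero_or_isJump (hm : 0 < m)
    (hrows : RowsIn (Srel n m i) c₀ cs)
    (hhigh : ∀ v, i + 2 ≤ v → v ≤ n + 1 → ¬ IsJump m c₀ v) (p : Fin m) :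
    nuOp n m (cs p) = 0 ∨ (nuOp n m (cs p) : ℕ) = i + 1 ∧ IsJump m (cs p) (i + 1) := by
  by_cases h0 : nuOp n m (cs p) = 0
  · exact .inl h0
  obtain ⟨w, hw⟩ := Nat.exists_eq_succ_of_ne_zero (Fin.val_ne_zero_iff.2 h0)
  have hjump : IsJump m (cs p) (w + 1) := Nat.findGreatest_of_ne_zero hw (by omega)
  have hle : w + 1 ≤ n + 1 := by have := (nuOp n m (cs p)).2; omega
  have hwi : w = i := by
    rcases lt_trichotomy w i with hlt | heq | hgt
    · refine absurd hjump (not_lt.2 ?_)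
      rw [countLE_side_of_le hrows p hlt, countLE_side_of_le hrows p hlt.le]
      exact Nat.le_mul_of_pos_left _ (by positivity)
    · exact heq
    · exact absurd ((isJump_side_iff hrows p (by omega)).1 hjump) (hhigh _ (by omega) hle)
  exact .inr ⟨hw.trans (by rw [hwi]), hwi ▸ hjump⟩

theorem exists_not_isJump_side (hm : 0 < m) (hi : i ≤ n)
    (hrows : RowsIn (Srel n m i) c₀ cs)
    (h₀ : nuOp n m c₀ = 0) : ∃ p, ¬ IsJump m (cs p) (i + 1) := by
  by_contra! hjump
  have hnone : ∀ w < i, ¬ IsJump m c₀ (w + 1) := fun w hw =>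
    Nat.findGreatest_eq_zero_iff.1 (congrArg Fin.val h₀) w.succ_pos (by omega)
  have hside : ∀ p, m ^ 2 ^ i * countLE (cs p) 0 < countLE c₀ i := fun p => by
    have := hjump p
    change m ^ 2 ^ i * countLE (cs p) i < countLE (cs p) (i + 1) at this
    rwa [countLE_side_of_le hrows p le_rfl, countLE_side_eq hrows p le_rfl,
      countLE_head_succ hrows] at this
  have : m * countLE c₀ i < m * countLE c₀ i :=
    calc m * countLE c₀ i ≤ m ^ 2 ^ i * countLE c₀ 0 := mul_countLE_le_of_not_isJump hnone
      _ ≤ m ^ 2 ^ i * ∑ p, countLE (cs p) 0 :=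
          Nat.mul_le_mul_left _ (countLE_head_zero_le_sum hrows)
      _ = ∑ p, m ^ 2 ^ i * countLE (cs p) 0 := mul_sum _ _ _
      _ < ∑ _p : Fin m, countLE c₀ i :=
          sum_lt_sum_of_nonempty (univ_nonempty_iff.2 ⟨⟨0, hm⟩⟩) fun p _ => hside p
      _ = m * countLE c₀ i := by simp
  exact lt_irrefl _ this

theorem compat_nuOp_Srel (hm : 0 < m) (hi : i ≤ n) :
    Compat (nuOp n m (K := K)) (Srel n m i) := by
  refine (compat_iff_cons _ _).2 fun c₀ cs hrows => cons_mem_Srel_iff.2 ?_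
  by_cases hhigh : ∃ v, i + 2 ≤ v ∧ v ≤ n + 1 ∧ IsJump m c₀ v
  · obtain ⟨v, hv, hvn, hjump⟩ := hhigh
    refine .inr ⟨(hv.trans (Nat.le_findGreatest hvn hjump)), fun p => Fin.ext ?_⟩
    exact (Nat.findGreatest_eq_of_iff_of_le
      (fun w hw => (isJump_side_iff hrows p (hv.trans hw)).symm) ⟨v, le_rfl, hvn, hjump⟩).symm
  push Not at hhigh
  have hside := nuOp_side_eq_zero_or_isJump hm hrows hhigh
  refine .inl ⟨Nat.findGreatest_le_of_forall_not fun v hv hvn hjump => ?_,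
    fun p => (hside p).imp_right And.left, ?_⟩
  · rcases (by omega : v = i + 1 ∨ i + 2 ≤ v) with rfl | hv
    · change _ < _ at hjump
      rw [countLE_head_succ hrows] at hjump
      exact absurd hjump (not_lt.2 (Nat.le_mul_of_pos_left _ (by positivity)))
    · exact hhigh v hv hvn hjump
  · by_cases h₀ : nuOp n m c₀ = 0
    · obtain ⟨p, hp⟩ := exists_not_isJump_side hm hi hrows h₀
      exact .inr ⟨p, ((hside p).resolve_right fun h => hp h.2)⟩
    · exact .inl h₀

end Rows

end UpperBound

section LowerBound

variable {n m k i d : ℕ} {t : (Fin k → Fin (n + 2)) → Fin (n + 2)}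
  {q q' q'' : Fin k → Fin (n + 2)} {b : Fin (n + 2)} {R : Finset (Fin k)}

def zeros (q : Fin k → Fin (n + 2)) : Finset (Fin k) := {j | q j = 0}

def fillZerosOutside (q : Fin k → Fin (n + 2)) (R : Finset (Fin k)) (b : Fin (n + 2)) :
    Fin k → Fin (n + 2) :=
  fun j => if q j = 0 ∧ j ∉ R then b else q j

def IsAbove (d : ℕ) (q : Fin k → Fin (n + 2)) : Prop := ∀ j, q j = 0 ∨ d < (q j : ℕ)

def Refines (d : ℕ) (q q' : Fin k → Fin (n + 2)) : Prop :=
  ∀ j, q' j = q j ∨ q j = 0 ∧ (q' j : ℕ) ≤ d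

def Absorbs (t : (Fin k → Fin (n + 2)) → Fin (n + 2)) (q : Fin k → Fin (n + 2))
    (b : Fin (n + 2)) (s : ℕ) : Prop :=
  ∀ R ⊆ zeros q, #R ≤ s → t (fillZerosOutside q R b) = b

def AbsorptionBound (m : ℕ) (t : (Fin k → Fin (n + 2)) → Fin (n + 2)) (i : ℕ) : Prop :=
  ∀ (b : Fin (n + 2)) (q : Fin k → Fin (n + 2)) (s : ℕ), (b : ℕ) = i + 1 → IsAbove (i + 1) q →
    Absorbs t q b s → s * m ^ 2 ^ i < #(zeros q)

theorem mem_zeros {j : Fin k} : j ∈ zeros q ↔ q j = 0 := by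
  simp [zeros]

theorem zeros_fillZerosOutside (hb : b ≠ 0) (hR : R ⊆ zeros q) :
    zeros (fillZerosOutside q R b) = R := by
  ext j
  by_cases hj : j ∈ R
  · simp [mem_zeros, fillZerosOutside, hj, mem_zeros.1 (hR hj)]
  · by_cases hqj : q j = 0 <;> simp [mem_zeros, fillZerosOutside, hj, hqj, hb]

theorem IsAbove.mono {d' : ℕ} (hq : IsAbove d q) (h : d' ≤ d) : IsAbove d' q :=
  fun j => (hq j).imp_right h.trans_lt

theorem IsAbove.fillZerosOutside (hq : IsAbove d q) (hb : d < b) :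
    IsAbove d (fillZerosOutside q R b) := by
  intro j
  unfold NearUnanimity.fillZerosOutside
  split_ifs
  exacts [.inr hb, hq j]

theorem refines_fillZerosOutside (hb : (b : ℕ) ≤ d) : Refines d q (fillZerosOutside q R b) := by
  intro j
  unfold fillZerosOutside
  split_ifs with h
  exacts [.inr ⟨h.1, hb⟩, .inl rfl]

theorem Refines.mono {d' : ℕ} (h : Refines d q q') (hd : d ≤ d') : Refines d' q q' :=
  fun j => (h j).imp_right fun h => ⟨h.1, h.2.trans hd⟩

theorem Refines.trans (h : Refines d q q') (h' : Refines d q' q'') : Refines d q q'' := by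
  intro j
  rcases h j with hj | ⟨hj, hle⟩ <;> rcases h' j with hj' | ⟨hj', hle'⟩
  · exact .inl (hj'.trans hj)
  · exact .inr ⟨hj ▸ hj', hle'⟩
  · exact .inr ⟨hj, hj' ▸ hle⟩
  · exact .inr ⟨hj, hle'⟩

theorem Refines.zeros_subset (h : Refines d q q') : zeros q' ⊆ zeros q := fun j hj => by
  rw [mem_zeros] at hj ⊢
  rcases h j with h | ⟨h, -⟩
  exacts [h ▸ hj, h]

theorem cons_fillZerosOutside_mem_Srel (hcmp : Compat t (Srel n m i)) (hb : (b : ℕ) = i + 1)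
    (hq : IsAbove (i + 1) q) (hq' : Refines i q q') (R : Fin m → Finset (Fin k))
    (hR : ∀ j, q' j = 0 → ∃ p, j ∈ R p) :
    (Fin.cons (t q') (fun p => t (fillZerosOutside q (R p) b)) : Fin (m + 1) → _) ∈
      Srel n m i := by
  refine (compat_iff_cons t _).1 hcmp q' (fun p => fillZerosOutside q (R p) b) fun j =>
    cons_mem_Srel_iff.2 ?_
  rcases hq j with hj | hj
  · refine .inl ⟨?_, fun p => ?_, ?_⟩
    · rcases hq' j with h | ⟨-, h⟩
      exacts [by simp [h, hj], h]
    · by_cases hjR : j ∈ R p <;> simp [fillZerosOutside, hj, hjR, hb]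
    · by_cases hj' : q' j = 0
      · obtain ⟨p, hp⟩ := hR j hj'
        exact .inr ⟨p, by simp [fillZerosOutside, hj, hp]⟩
      · exact .inl hj'
  · have hj0 : q j ≠ 0 := fun h => by simp [h] at hj
    have hq'j : q' j = q j := (hq' j).resolve_right fun h => hj0 h.1
    exact .inr ⟨hq'j ▸ hj, fun p => by simp [fillZerosOutside, hj0, hq'j]⟩

theorem fillZerosOutside_dichotomy (hm : 2 ≤ m) (hcmp : Compat t (Srel n m i))
    (hb : (b : ℕ) = i + 1) (hq : IsAbove (i + 1) q) (R : Finset (Fin k)) :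
    ((t q : ℕ) ≤ i ∧ (t (fillZerosOutside q R b) = 0 ∨ t (fillZerosOutside q R b) = b)) ∨
      (i + 1 < (t q : ℕ) ∧ t (fillZerosOutside q R b) = t q) := by
  -- Columns `q, fillZerosOutside q R b, q, …, q`: the third one puts a zero in every row that
  -- starts with a zero, so no row is the excluded tuple.
  have hcol := cons_fillZerosOutside_mem_Srel hcmp hb hq (fun _ => .inl rfl)
    (fun p : Fin m => if (p : ℕ) = 0 then R else univ) fun _ _ => ⟨⟨1, hm⟩, by simp⟩
  rcases cons_mem_Srel_iff.1 hcol with ⟨hle, hs, -⟩ | ⟨hlt, hs⟩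
  · refine .inl ⟨hle, ?_⟩
    have h := hs ⟨0, by omega⟩
    simp only [if_pos] at h
    rw [← hb, Fin.val_inj] at h
    exact h
  · exact .inr ⟨hlt, by simpa using hs ⟨0, by omega⟩⟩

theorem fillZerosOutside_eq_zero_of_ne (hm : 2 ≤ m) (hcmp : Compat t (Srel n m i))
    (hb : (b : ℕ) = i + 1) (hq : IsAbove (i + 1) q) (h₀ : t q = 0)
    (hne : t (fillZerosOutside q R b) ≠ b) : t (fillZerosOutside q R b) = 0 := by
  rcases fillZerosOutside_dichotomy hm hcmp hb hq R with ⟨-, h | h⟩ | ⟨hlt, -⟩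
  exacts [h, absurd h hne, by simp [h₀] at hlt]

theorem eq_zero_of_fillZerosOutside_eq (hm : 2 ≤ m) (hcmp : Compat t (Srel n m i))
    (hb : (b : ℕ) = i + 1) (hq : IsAbove (i + 1) q) (hcons : t q ∈ Set.range q)
    (heq : t (fillZerosOutside q R b) = b) : t q = 0 := by
  rcases fillZerosOutside_dichotomy hm hcmp hb hq R with ⟨hle, -⟩ | ⟨hlt, h⟩
  · obtain ⟨j, hj⟩ := hcons
    rcases hq j with h | h
    · rw [← hj, h]
    · omega
  · rw [← h, heq] at hlt
    omega

theorem exists_refines_eq_zero (hm : 2 ≤ m) (hcmp : ∀ i ≤ n, Compat t (Srel n m i))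
    (hd : d ≤ n + 1) (hbound : ∀ l < d, AbsorptionBound m t l)
    (hq : IsAbove d q) (h₀ : t q = 0) {c : ℕ} (hcard : #(zeros q) ≤ c * m ^ (2 ^ d - 1)) :
    ∃ q', Refines d q q' ∧ t q' = 0 ∧ #(zeros q') ≤ c := by
  induction d generalizing q with
  | zero => exact ⟨q, fun _ => .inl rfl, h₀, by simpa using hcard⟩
  | succ d ih =>
    set b : Fin (n + 2) := ⟨d + 1, by omega⟩
    have hfail : ¬ Absorbs t q b (c * m ^ (2 ^ d - 1)) := fun habs => by
      have := hbound d d.lt_succ_self b q _ rfl hq habs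
      rw [Nat.pow_two_pow_succ_sub_one, ← mul_assoc] at hcard
      omega
    simp only [Absorbs, not_forall] at hfail
    obtain ⟨R, hRq, hRc, hne⟩ := hfail
    have hb0 : b ≠ 0 := Fin.ne_of_val_ne (by simp [b])
    obtain ⟨q', hq', h₀', hcard'⟩ := ih (by omega) (fun l hl => hbound l (by omega))
      ((hq.mono d.le_succ).fillZerosOutside (by simp [b]))
      (fillZerosOutside_eq_zero_of_ne hm (hcmp d (by omega)) rfl hq h₀ hne)
      (by rwa [zeros_fillZerosOutside hb0 hRq])
    exact ⟨q', (refines_fillZerosOutside le_rfl).trans (hq'.mono d.le_succ), h₀', hcard'⟩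

theorem absorptionBound_of_forall_lt (hm : 2 ≤ m) (hcmp : ∀ i ≤ n, Compat t (Srel n m i))
    (hcons : ∀ q, t q ∈ Set.range q) (hbound : ∀ l < i, AbsorptionBound m t l) :
    AbsorptionBound m t i := by
  intro b q s hb hq habs
  by_contra! hcard
  have hi : i ≤ n := by have := b.2; omega
  have h₀ : t q = 0 := eq_zero_of_fillZerosOutside_eq hm (hcmp i hi) hb hq (hcons q)
    (habs ∅ (empty_subset _) (by simp))
  obtain ⟨q', hq', h₀', hcard'⟩ := exists_refines_eq_zero hm hcmp (by omega) hbound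
    (hq.mono i.le_succ) h₀ (c := s * m) (by rwa [mul_assoc, Nat.mul_pow_two_pow_sub_one])
  obtain ⟨P, hP, hcover⟩ := exists_cover_of_card_le_mul (M := m) (E := zeros q')
    (by rwa [mul_comm])
  have hcol := cons_fillZerosOutside_mem_Srel (hcmp i hi) hb hq hq' (fun p => zeros q ∩ P p)
    fun j hj => (hcover j (mem_zeros.2 hj)).imp fun p hp =>
      mem_inter.2 ⟨hq'.zeros_subset (mem_zeros.2 hj), hp⟩
  have hside : ∀ p, t (fillZerosOutside q (zeros q ∩ P p) b) = b := fun p =>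
    habs _ inter_subset_left ((card_le_card inter_subset_right).trans (hP p))
  simp only [h₀', hside] at hcol
  rcases cons_mem_Srel_iff.1 hcol with ⟨-, -, h | ⟨p, hp⟩⟩ | ⟨h, -⟩
  · exact h rfl
  · exact absurd (congrArg Fin.val hp) (by simp [hb])
  · simp at h

theorem absorptionBound (hm : 2 ≤ m) (hcmp : ∀ i ≤ n, Compat t (Srel n m i))
    (hcons : ∀ q, t q ∈ Set.range q) (i : ℕ) : AbsorptionBound m t i :=
  Nat.strong_induction_on i fun _ ih => absorptionBound_of_forall_lt hm hcmp hcons ih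

theorem absorbs_of_isNU (hnu : IsNU t) (b : Fin (n + 2)) : Absorbs t (fun _ => 0) b 1 := by
  intro R _ hR
  have : Nonempty (Fin k) := ⟨⟨0, by have := hnu.1; omega⟩⟩
  obtain ⟨j, hj⟩ := card_le_one_iff_subset_singleton.1 hR
  have hfill : fillZerosOutside (fun _ => 0) R b = Function.update (fun _ => b) j
      (if j ∈ R then 0 else b) := by
    funext j'
    by_cases hj' : j' = j
    · subst hj'
      by_cases hjR : j' ∈ R <;> simp [fillZerosOutside, hjR]
    · have : j' ∉ R := fun h => hj' (mem_singleton.1 (hj h))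
      simp [fillZerosOutside, hj', this]
  rw [hfill]
  exact hnu.2 _ _ _

end LowerBound

end NearUnanimity

open NearUnanimity

theorem stmt12_general (n m : ℕ) (hm : 2 ≤ m) :
    (∃ f : (Fin (m ^ 2 ^ n + 1) → Fin (n + 2)) → Fin (n + 2),
      PolyA n m f ∧ IsNU f) ∧
    (∀ k, 3 ≤ k → k ≤ m ^ 2 ^ n →
      ¬ ∃ t : (Fin k → Fin (n + 2)) → Fin (n + 2), PolyA n m t ∧ IsNU t) := by
  refine ⟨⟨nuOp n m, ⟨fun i hi => compat_nuOp_Srel (by omega) hi, fun X _ =>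
    compatUnary_of_forall_apply_mem_range (nuOp_mem_range (by omega) (Nat.succ_pos _)) X⟩,
    isNU_nuOp hm⟩, ?_⟩
  rintro k hk3 hk ⟨t, ⟨hcmp, hunary⟩, hnu⟩
  have hbound := absorptionBound hm hcmp (apply_mem_range_of_forall_compatUnary hunary (by omega))
    n (Fin.last (n + 1)) (fun _ => 0) 1 (Fin.val_last _) (fun _ => .inl rfl)
    (absorbs_of_isNU hnu _)
  have hzeros : #(zeros fun _ : Fin k => (0 : Fin (n + 2))) = k := by simp [zeros]
  omega

/-- For `n > 0` or `m > 2`, the structure `𝔄` admits an NU polymorphism of arity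
`m^(2^n) + 1`, but no NU polymorphism of arity `k` for any `3 ≤ k ≤ m^(2^n)`. -/
theorem stmt12 (n m : ℕ) (hm : 2 ≤ m) (hnm : 0 < n ∨ 2 < m) :
    (∃ f : (Fin (m ^ 2 ^ n + 1) → Fin (n + 2)) → Fin (n + 2),
      PolyA n m f ∧ IsNU f) ∧
    (∀ k, 3 ≤ k → k ≤ m ^ 2 ^ n →
      ¬ ∃ t : (Fin k → Fin (n + 2)) → Fin (n + 2), PolyA n m t ∧ IsNU t) :=
  stmt12_general n m hm
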